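/- arXiv:1211.4213 — 5 statements merged into one kernel-verified Lean document; each statement's English description precedes it below -/
import Mathlib

section
/- Suppose there exists a vector v ∈ ℂ^N with H_ii v ≠ 0 and H_ji v = 0 for all j ≠ i. If the feasible tuple (Q_1, …, Q_K) is Pareto-optimal, then the column space (range) of Q_i is contained in the sum of the ranges of the matrices H_ji^H for j = 1, …, K, i.e., range(Q_i) ⊆ range(H_1i^H) + range(H_2i^H) + ⋯ + range(H_Ki^H) as subspaces of ℂ^N. (Theorem 1, subspace condition.) -/
open Matrix
open scoped ComplexOrder

/-- The achievable rate of user `i` in the `K`-pair Gaussian `(N, M 1, …, M K)` MIMO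
interference channel with transmit covariance matrices `Q` and channel matrices `H`,
where interference is treated as noise:
`R_i = log det (I + (I + ∑_{j ≠ i} H i j Q j (H i j)ᴴ)⁻¹ H i i Q i (H i i)ᴴ)`. -/
noncomputable def rate {K N : ℕ} {M : Fin K → ℕ}
    (H : ∀ i j : Fin K, Matrix (Fin (M i)) (Fin N) ℂ)
    (Q : Fin K → Matrix (Fin N) (Fin N) ℂ) (i : Fin K) : ℝ :=
  Real.log ((1 + (1 + ∑ j ∈ Finset.univ.erase i, H i j * Q j * (H i j)ᴴ)⁻¹ *
    (H i i * Q i * (H i i)ᴴ)).det.re)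

/-- Feasibility: each `Q j` is positive semidefinite with `tr (Q j) ≤ P j`. -/
def Feasible {K N : ℕ} (P : Fin K → ℝ) (Q : Fin K → Matrix (Fin N) (Fin N) ℂ) : Prop :=
  ∀ j, (Q j).PosSemidef ∧ (Q j).trace.re ≤ P j

/-- Pareto optimality: `Q` is feasible and no feasible `Q'` weakly improves every user's
rate while strictly improving at least one user's rate. -/
def ParetoOptimal {K N : ℕ} {M : Fin K → ℕ}
    (H : ∀ i j : Fin K, Matrix (Fin (M i)) (Fin N) ℂ)
    (P : Fin K → ℝ) (Q : Fin K → Matrix (Fin N) (Fin N) ℂ) : Prop :=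
  Feasible P Q ∧
    ¬ ∃ Q' : Fin K → Matrix (Fin N) (Fin N) ℂ, Feasible P Q' ∧
      (∀ j, rate H Q j ≤ rate H Q' j) ∧ (∃ j, rate H Q j < rate H Q' j)

/-!
Let `E` be the orthogonal projection onto `S = ∑ⱼ range (H j i)ᴴ`. Since `H j i * E = H j i` for
every `j`, replacing `Q i` by `E * Q i * E` changes no received signal, and it frees the power
`tr ((1 - E) * Q i * (1 - E))`, which is positive unless `range (Q i) ⊆ S`. Spending that power on
the direction `v`, which only receiver `i` hears, leaves every other rate unchanged and strictly
raises rate `i` (matrix determinant lemma), contradicting Pareto optimality.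
-/

namespace Matrix

variable {𝕜 : Type*} [RCLike 𝕜] {m n : Type*} [Fintype n]

theorem exists_isStarProjection_range_mulVecLin_eq [DecidableEq n] (S : Submodule 𝕜 (n → 𝕜)) :
    ∃ E : Matrix n n 𝕜, IsStarProjection E ∧ LinearMap.range E.mulVecLin = S := by
  let S' := S.comap (WithLp.linearEquiv 2 𝕜 (n → 𝕜)).toLinearMap
  let E := (toEuclideanCLM (n := n) (𝕜 := 𝕜)).symm S'.starProjection
  have hE (y : n → 𝕜) : E *ᵥ y = WithLp.ofLp (S'.starProjection (WithLp.toLp 2 y)) := by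
    change (toEuclideanCLM (n := n) (𝕜 := 𝕜)).symm _ *ᵥ WithLp.ofLp (WithLp.toLp 2 y) = _
    rw [← ofLp_toEuclideanCLM, StarAlgEquiv.apply_symm_apply]
  refine ⟨E, (isStarProjection_starProjection (U := S')).map
    (toEuclideanCLM (n := n) (𝕜 := 𝕜)).symm.toStarAlgHom, ?_⟩
  ext x
  have : x ∈ S ↔ WithLp.toLp 2 x ∈ S'.starProjection.range := by
    rw [Submodule.range_starProjection]; rfl
  rw [this]
  constructor
  · rintro ⟨y, rfl⟩
    exact ⟨WithLp.toLp 2 y, by simp [hE]⟩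
  · rintro ⟨y, hy⟩
    refine ⟨WithLp.ofLp y, ?_⟩
    simpa [hE] using congrArg WithLp.ofLp hy

theorem mul_eq_self_of_range_mulVecLin_le [Fintype m] {R : Type*} [CommSemiring R]
    {E : Matrix n n R} (hE : IsIdempotentElem E) {A : Matrix n m R}
    (h : LinearMap.range A.mulVecLin ≤ LinearMap.range E.mulVecLin) : E * A = A := by
  refine ext_iff_mulVec.mpr fun x => ?_
  obtain ⟨y, hy⟩ := h ⟨x, rfl⟩
  simp only [mulVecLin_apply] at hy
  rw [← mulVec_mulVec, ← hy, mulVec_mulVec, hE.eq]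

theorem mul_eq_self_of_range_conjTranspose_le [Fintype m] {E : Matrix n n 𝕜}
    (hE : IsStarProjection E) {A : Matrix m n 𝕜}
    (h : LinearMap.range Aᴴ.mulVecLin ≤ LinearMap.range E.mulVecLin) :
    A * E = A := by
  have := congrArg conjTranspose (mul_eq_self_of_range_mulVecLin_le hE.isIdempotentElem h)
  rwa [conjTranspose_mul, conjTranspose_conjTranspose, ← star_eq_conjTranspose,
    hE.isSelfAdjoint.star_eq] at this

theorem trace_mul_mul_add_trace_one_sub_mul_mul {R : Type*} [CommRing R] [DecidableEq n]
    {E : Matrix n n R} (hE : IsIdempotentElem E) (Q : Matrix n n R) :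
    (E * Q * E).trace + ((1 - E) * Q * (1 - E)).trace = Q.trace := by
  rw [trace_mul_cycle, hE.eq, trace_mul_cycle, hE.one_sub.eq, sub_mul, one_mul, trace_sub,
    add_sub_cancel]

theorem PosSemidef.mul_eq_zero_of_conjTranspose_mul_mul_eq_zero [Fintype m] {Q : Matrix n n 𝕜}
    (hQ : Q.PosSemidef) {B : Matrix n m 𝕜} (h : Bᴴ * Q * B = 0) : Q * B = 0 := by
  refine ext_iff_mulVec.mpr fun x => ?_
  rw [zero_mulVec, ← mulVec_mulVec, ← hQ.dotProduct_mulVec_zero_iff, star_mulVec,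
    ← dotProduct_mulVec, mulVec_mulVec, mulVec_mulVec, h, zero_mulVec, dotProduct_zero]

theorem PosSemidef.range_mulVecLin_le_of_trace_eq_zero [DecidableEq n] {Q E : Matrix n n 𝕜}
    (hQ : Q.PosSemidef) (hE : IsStarProjection E) (h : ((1 - E) * Q * (1 - E)).trace = 0) :
    LinearMap.range Q.mulVecLin ≤ LinearMap.range E.mulVecLin := by
  have hR : (1 - E)ᴴ = 1 - E := hE.one_sub.isSelfAdjoint.star_eq
  have hRQR : (1 - E)ᴴ * Q * (1 - E) = 0 := by
    rw [← (hQ.conjTranspose_mul_mul_same (1 - E)).trace_eq_zero_iff, hR, h]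
  have hQE : E * Q = Q := by
    have : (Q * (1 - E))ᴴ = 0 := by
      rw [hQ.mul_eq_zero_of_conjTranspose_mul_mul_eq_zero hRQR, conjTranspose_zero]
    rwa [conjTranspose_mul, hR, hQ.isHermitian.eq, sub_mul, one_mul,
      sub_eq_zero, eq_comm] at this
  rintro _ ⟨x, rfl⟩
  exact ⟨Q *ᵥ x, by rw [mulVecLin_apply, mulVecLin_apply, mulVec_mulVec, hQE]⟩

theorem PosDef.det_lt_det_add_smul_vecMulVec [DecidableEq n] {A : Matrix n n 𝕜} (hA : A.PosDef)
    {w : n → 𝕜} (hw : w ≠ 0) {c : 𝕜} (hc : 0 < c) :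
    A.det < (A + c • vecMulVec w (star w)).det := by
  rw [← smul_vecMulVec, vecMulVec_eq Unit,
    det_add_replicateCol_mul_replicateRow (isUnit_iff_ne_zero.mpr hA.det_pos.ne'),
    det_unique (n := Unit)]
  refine lt_mul_of_one_lt_right hA.det_pos ?_
  rw [add_apply, one_apply_eq, lt_add_iff_pos_right, ← replicateRow_vecMul,
    replicateRow_mul_replicateCol_apply, ← dotProduct_mulVec, mulVec_smul, dotProduct_smul,
    smul_eq_mul]
  exact mul_pos hc (hA.inv.dotProduct_mulVec_pos hw)

theorem det_one_add_inv_mul [DecidableEq n] {C : Matrix n n 𝕜} (hC : IsUnit C.det)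
    (X : Matrix n n 𝕜) : (1 + C⁻¹ * X).det = C⁻¹.det * (C + X).det := by
  rw [← det_mul, mul_add, nonsing_inv_mul _ hC]

theorem PosDef.det_one_add_inv_mul_pos [DecidableEq n] {C B : Matrix n n 𝕜} (hC : C.PosDef)
    (hB : B.PosSemidef) : 0 < (1 + C⁻¹ * B).det := by
  rw [det_one_add_inv_mul hC.det_pos.ne'.isUnit]
  exact mul_pos hC.inv.det_pos (hC.add_posSemidef hB).det_pos

theorem PosDef.det_one_add_inv_mul_lt [DecidableEq n] {C B : Matrix n n 𝕜} (hC : C.PosDef)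
    (hB : B.PosSemidef) {w : n → 𝕜} (hw : w ≠ 0) {c : 𝕜} (hc : 0 < c) :
    (1 + C⁻¹ * B).det < (1 + C⁻¹ * (B + c • vecMulVec w (star w))).det := by
  rw [det_one_add_inv_mul hC.det_pos.ne'.isUnit, det_one_add_inv_mul hC.det_pos.ne'.isUnit,
    ← add_assoc]
  exact mul_lt_mul_of_pos_left ((hC.add_posSemidef hB).det_lt_det_add_smul_vecMulVec hw hc)
    hC.inv.det_pos

theorem mul_vecMulVec_star_mul_conjTranspose (A : Matrix m n 𝕜) (v : n → 𝕜) :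
    A * vecMulVec v (star v) * Aᴴ = vecMulVec (A *ᵥ v) (star (A *ᵥ v)) := by
  rw [mul_vecMulVec, vecMulVec_mul, star_mulVec]

end Matrix

section Rate

open Function Finset

variable {K N : ℕ} {M : Fin K → ℕ} (H : ∀ i j : Fin K, Matrix (Fin (M i)) (Fin N) ℂ)

theorem rate_update_of_ne (Q : Fin K → Matrix (Fin N) (Fin N) ℂ) {i j : Fin K} (hji : j ≠ i)
    {X : Matrix (Fin N) (Fin N) ℂ} (hX : H j i * X * (H j i)ᴴ = H j i * Q i * (H j i)ᴴ) :
    rate H (update Q i X) j = rate H Q j := by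
  have hsum : ∑ k ∈ univ.erase j, H j k * update Q i X k * (H j k)ᴴ =
      ∑ k ∈ univ.erase j, H j k * Q k * (H j k)ᴴ := by
    refine sum_congr rfl fun k _ => ?_
    rcases eq_or_ne k i with rfl | hki
    · rw [update_self, hX]
    · rw [update_of_ne hki]
  rw [rate, rate, hsum, update_of_ne hji]

theorem rate_lt_rate_update {Q : Fin K → Matrix (Fin N) (Fin N) ℂ} (hQ : ∀ j, (Q j).PosSemidef)
    (i : Fin K) {X : Matrix (Fin N) (Fin N) ℂ} {w : Fin (M i) → ℂ} (hw : w ≠ 0) {c : ℂ}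
    (hc : 0 < c) (hX : H i i * X * (H i i)ᴴ = H i i * Q i * (H i i)ᴴ + c • vecMulVec w (star w)) :
    rate H Q i < rate H (update Q i X) i := by
  have hC : (1 + ∑ j ∈ univ.erase i, H i j * Q j * (H i j)ᴴ).PosDef :=
    PosDef.one.add_posSemidef
      (posSemidef_sum _ fun j _ => (hQ j).mul_mul_conjTranspose_same (H i j))
  have hB := (hQ i).mul_mul_conjTranspose_same (H i i)
  have hsum : ∑ j ∈ univ.erase i, H i j * update Q i X j * (H i j)ᴴ =
      ∑ j ∈ univ.erase i, H i j * Q j * (H i j)ᴴ :=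
    sum_congr rfl fun j hj => by rw [update_of_ne (ne_of_mem_erase hj)]
  rw [rate, rate, update_self, hsum, hX]
  exact Real.log_lt_log (Complex.pos_iff.mp (hC.det_one_add_inv_mul_pos hB)).1
    (Complex.lt_def.mp (hC.det_one_add_inv_mul_lt hB hw hc)).1

theorem Feasible.update {P : Fin K → ℝ} {Q : Fin K → Matrix (Fin N) (Fin N) ℂ}
    (hQ : Feasible P Q) (i : Fin K) {X : Matrix (Fin N) (Fin N) ℂ} (hX : X.PosSemidef)
    (htr : X.trace.re ≤ P i) : Feasible P (update Q i X) := by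
  intro j
  rcases eq_or_ne j i with rfl | hji
  · rw [update_self]
    exact ⟨hX, htr⟩
  · rw [update_of_ne hji]
    exact hQ j

theorem ParetoOptimal.trace_one_sub_mul_mul_eq_zero {P : Fin K → ℝ}
    {Q : Fin K → Matrix (Fin N) (Fin N) ℂ} (hQ : ParetoOptimal H P Q) {i : Fin K}
    {E : Matrix (Fin N) (Fin N) ℂ} (hE : IsStarProjection E) (hHE : ∀ j, H j i * E = H j i)
    {v : Fin N → ℂ} (hv_i : H i i *ᵥ v ≠ 0) (hv_j : ∀ j, j ≠ i → H j i *ᵥ v = 0) :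
    ((1 - E) * Q i * (1 - E)).trace = 0 := by
  obtain ⟨hfeas, hopt⟩ := hQ
  obtain ⟨hQi, htr⟩ := hfeas i
  have hR : (1 - E)ᴴ = 1 - E := hE.one_sub.isSelfAdjoint.star_eq
  have hfree_nonneg := (hQi.conjTranspose_mul_mul_same (1 - E)).trace_nonneg
  rw [hR] at hfree_nonneg
  by_contra hfree
  have hfree_pos := lt_of_le_of_ne' hfree_nonneg hfree
  have hv : v ≠ 0 := by
    rintro rfl
    exact hv_i (mulVec_zero _)
  set c := ((1 - E) * Q i * (1 - E)).trace / (v ⬝ᵥ star v)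
  have hc : 0 < c := div_pos hfree_pos (dotProduct_self_star_pos_iff.mpr hv)
  set X := E * Q i * E + c • vecMulVec v (star v) with hXdef
  have hEE : Eᴴ = E := hE.isSelfAdjoint.star_eq
  have hX (j : Fin K) : H j i * X * (H j i)ᴴ =
      H j i * Q i * (H j i)ᴴ + c • vecMulVec (H j i *ᵥ v) (star (H j i *ᵥ v)) := by
    have hEH : E * (H j i)ᴴ = (H j i)ᴴ := by
      rw [← hEE, ← conjTranspose_mul, hHE]
    rw [hXdef, Matrix.mul_add, Matrix.add_mul, Matrix.mul_smul, Matrix.smul_mul,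
      mul_vecMulVec_star_mul_conjTranspose, ← Matrix.mul_assoc, ← Matrix.mul_assoc, hHE,
      Matrix.mul_assoc, hEH]
  have hXpsd : X.PosSemidef := by
    refine .add ?_ ((posSemidef_vecMulVec_self_star v).smul hc.le)
    simpa only [hEE] using hQi.mul_mul_conjTranspose_same E
  have hXtr : X.trace = (Q i).trace := by
    rw [trace_add, trace_smul, trace_vecMulVec, smul_eq_mul,
      div_mul_cancel₀ _ (dotProduct_self_star_pos_iff.mpr hv).ne',
      trace_mul_mul_add_trace_one_sub_mul_mul hE.isIdempotentElem]
  have hlt := rate_lt_rate_update H (fun j => (hfeas j).1) i hv_i hc (hX i)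
  refine hopt ⟨update Q i X, hfeas.update i hXpsd (hXtr ▸ htr), fun j => ?_, i, hlt⟩
  rcases eq_or_ne j i with rfl | hji
  · exact hlt.le
  · rw [rate_update_of_ne H Q hji (by rw [hX j, hv_j j hji]; simp)]

end Rate

theorem stmt0_general {K N : ℕ} {M : Fin K → ℕ}
    (H : ∀ i j : Fin K, Matrix (Fin (M i)) (Fin N) ℂ)
    (P : Fin K → ℝ)
    (Q : Fin K → Matrix (Fin N) (Fin N) ℂ) (i : Fin K)
    (hv : ∃ v : Fin N → ℂ, H i i *ᵥ v ≠ 0 ∧ ∀ j, j ≠ i → H j i *ᵥ v = 0)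
    (hPareto : ParetoOptimal H P Q) :
    LinearMap.range (Q i).mulVecLin ≤
      ⨆ j : Fin K, LinearMap.range ((H j i)ᴴ).mulVecLin := by
  obtain ⟨v, hv_i, hv_j⟩ := hv
  obtain ⟨E, hE, hES⟩ :=
    exists_isStarProjection_range_mulVecLin_eq (⨆ j, LinearMap.range ((H j i)ᴴ).mulVecLin)
  have hHE (j : Fin K) : H j i * E = H j i := by
    refine mul_eq_self_of_range_conjTranspose_le hE ?_
    rw [hES]
    exact le_iSup (fun j => LinearMap.range ((H j i)ᴴ).mulVecLin) j
  rw [← hES]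
  exact (hPareto.1 i).1.range_mulVecLin_le_of_trace_eq_zero hE
    (hPareto.trace_one_sub_mul_mul_eq_zero H hE hHE hv_i hv_j)

/-- **Theorem 1, subspace condition.** If there is a vector `v` with `H i i v ≠ 0` and
`H j i v = 0` for all `j ≠ i`, and `(Q 1, …, Q K)` is Pareto-optimal, then the column
space (range) of `Q i` is contained in the sum of the ranges of the matrices `(H j i)ᴴ`,
`j = 1, …, K`, as subspaces of `ℂ^N`. -/
theorem stmt0 {K N : ℕ} {M : Fin K → ℕ}
    (H : ∀ i j : Fin K, Matrix (Fin (M i)) (Fin N) ℂ)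
    (P : Fin K → ℝ) (hP : ∀ j, 0 < P j)
    (Q : Fin K → Matrix (Fin N) (Fin N) ℂ) (i : Fin K)
    (hv : ∃ v : Fin N → ℂ, H i i *ᵥ v ≠ 0 ∧ ∀ j, j ≠ i → H j i *ᵥ v = 0)
    (hPareto : ParetoOptimal H P Q) :
    LinearMap.range (Q i).mulVecLin ≤
      ⨆ j : Fin K, LinearMap.range ((H j i)ᴴ).mulVecLin :=
  stmt0_general H P Q i hv hPareto
end

section
/- Let V_1, V_2 ∈ ℂ^{N×M} each have orthonormal columns (V_1^H V_1 = I_M and V_2^H V_2 = I_M), and suppose the M×M matrix V_2^H V_1 is invertible. Then the span of the columns of the N×2M matrix [V_1, (I_N − V_2 V_2^H) V_1] equals the span of the columns of [V_1, V_2]. (Key subspace identity in Corollary 1: C([V_11^∥, Π_{V_21^⊥} V_11^∥]) = C([V_11^∥, V_21^∥]).) -/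
/-!
Writing `B = V₂ᴴ V₁`, the second block is `(I - V₂ V₂ᴴ) V₁ = V₁ - V₂ B`. Modulo the columns of `V₁`,
adjoining the columns of `V₁ - V₂ B` is the same as adjoining those of `V₂ B`, and since `B` is
invertible, `V₂ B` and `V₂` have the same column space.
-/

open Matrix

theorem LinearMap.range_sup_range_sub {R M N : Type*} [Ring R] [AddCommGroup M] [AddCommGroup N]
    [Module R M] [Module R N] (f g : M →ₗ[R] N) :
    range f ⊔ range (f - g) = range f ⊔ range g := by
  apply le_antisymm <;> refine sup_le le_sup_left ?_ <;> rintro _ ⟨x, rfl⟩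
  · exact sub_mem (Submodule.mem_sup_left ⟨x, rfl⟩) (Submodule.mem_sup_right ⟨x, rfl⟩)
  · have hg : g x = f x - (f - g) x := by simp
    rw [hg]
    exact sub_mem (Submodule.mem_sup_left ⟨x, rfl⟩) (Submodule.mem_sup_right ⟨x, rfl⟩)

namespace Matrix

variable {R l m n : Type*}

theorem mulVecLin_sub [CommRing R] [Fintype m] (A B : Matrix l m R) :
    (A - B).mulVecLin = A.mulVecLin - B.mulVecLin := by
  ext
  simp

theorem range_mulVecLin_fromCols [CommSemiring R] [Fintype m] [Fintype n]
    (A : Matrix l m R) (B : Matrix l n R) :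
    LinearMap.range (fromCols A B).mulVecLin =
      LinearMap.range A.mulVecLin ⊔ LinearMap.range B.mulVecLin := by
  rw [range_mulVecLin, range_mulVecLin, range_mulVecLin, ← Submodule.span_union,
    ← Set.Sum.elim_range]
  congr 2
  ext (j | j) i <;> rfl

theorem range_mulVecLin_mul_of_isUnit [CommRing R] [Fintype m] [DecidableEq m]
    (A : Matrix l m R) {B : Matrix m m R} (hB : IsUnit B) :
    LinearMap.range (A * B).mulVecLin = LinearMap.range A.mulVecLin := by
  rw [mulVecLin_mul, LinearMap.range_comp_of_range_eq_top _
    (LinearMap.range_eq_top_of_surjective _ (mulVec_surjective_iff_isUnit.mpr hB))]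

end Matrix

theorem stmt9_general {N M : ℕ} (V1 V2 : Matrix (Fin N) (Fin M) ℂ)
    (hinv : IsUnit (V2ᴴ * V1)) :
    LinearMap.range (Matrix.fromCols V1 ((1 - V2 * V2ᴴ) * V1)).mulVecLin =
      LinearMap.range (Matrix.fromCols V1 V2).mulVecLin := by
  rw [range_mulVecLin_fromCols, range_mulVecLin_fromCols, Matrix.sub_mul, Matrix.one_mul,
    Matrix.mul_assoc, mulVecLin_sub, LinearMap.range_sup_range_sub,
    range_mulVecLin_mul_of_isUnit _ hinv]

/-- **Key subspace identity in Corollary 1.** If `V₁, V₂ ∈ ℂ^{N×M}` have orthonormal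
columns and `V₂ᴴ V₁` is invertible, then the column span of `[V₁, (I − V₂ V₂ᴴ) V₁]`
equals the column span of `[V₁, V₂]`. -/
theorem stmt9 {N M : ℕ} (V1 V2 : Matrix (Fin N) (Fin M) ℂ)
    (h1 : V1ᴴ * V1 = 1) (h2 : V2ᴴ * V2 = 1) (hinv : IsUnit (V2ᴴ * V1)) :
    LinearMap.range (Matrix.fromCols V1 ((1 - V2 * V2ᴴ) * V1)).mulVecLin =
      LinearMap.range (Matrix.fromCols V1 V2).mulVecLin :=
  stmt9_general V1 V2 hinv
end

section
/- Let Υ ∈ ℂ^{N×m} have orthonormal columns (Υ^H Υ = I_m), let 1 ≤ M ≤ m, let P > 0, and let Q ∈ ℂ^{N×N} be positive semidefinite with range(Q) ⊆ range(Υ), rank(Q) ≤ M, and tr(Q) = P. Then there exist a matrix U ∈ ℂ^{m×M} with U^H U = I_M and nonnegative real numbers λ_1, …, λ_M with Σ_{k=1}^M λ_k = P such that Q = Υ U Λ U^H Υ^H, where Λ = diag(λ_1, …, λ_M). (Theorem 2, the parameterization direction: every Pareto-optimal covariance lies in the image of the product manifold V_{m,M} × H_M.) -/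
open Matrix
open scoped ComplexOrder

/-!
Since `Υᴴ Υ = 1`, the projector `Υ Υᴴ` fixes every vector of `range Υ ⊇ range Q`, so
`Q = Υ R Υᴴ` with `R = Υᴴ Q Υ`, which is again positive semidefinite, of rank at most `M` and of
trace `tr Q = P`. The spectral theorem writes `R = V diag(λ) Vᴴ` with `V` unitary and `λ ≥ 0`;
at most `M` of the eigenvalues are nonzero, so keeping `M` columns of `V` that include all of
their eigenvectors gives `U`, and `∑ λ_k = tr R = P`.
-/

theorem Finset.exists_fin_embedding_range_superset {α : Type*} [Fintype α] {s : Finset α} {M : ℕ}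
    (hs : s.card ≤ M) (hM : M ≤ Fintype.card α) :
    ∃ e : Fin M ↪ α, ∀ a ∉ Set.range e, a ∉ s := by
  obtain ⟨t, hst, rfl⟩ := Finset.exists_superset_card_eq hs hM
  refine ⟨t.equivFin.symm.toEmbedding.trans (Function.Embedding.subtype _), fun a ha has => ?_⟩
  exact ha ⟨t.equivFin ⟨a, hst has⟩, by simp⟩

namespace Matrix

variable {R : Type*} {k l m n : Type*}

section CommSemiring

variable [CommSemiring R] [Star R] [Fintype m]

theorem mul_conjTranspose_mul_eq_self_of_range_le [Fintype n] [Fintype l] [DecidableEq l]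
    [DecidableEq m] {Υ : Matrix n m R} (hΥ : Υᴴ * Υ = 1) {Q : Matrix n l R}
    (h : LinearMap.range Q.mulVecLin ≤ LinearMap.range Υ.mulVecLin) : Υ * Υᴴ * Q = Q := by
  refine ext_of_mulVec_single fun j => ?_
  obtain ⟨x, hx⟩ := h (LinearMap.mem_range_self _ (Pi.single j 1))
  simp only [mulVecLin_apply] at hx
  rw [← mulVec_mulVec, ← hx, mulVec_mulVec, Matrix.mul_assoc, hΥ, Matrix.mul_one]

theorem trace_conjTranspose_mul_mul_of_range_le [Fintype n] [DecidableEq n] [DecidableEq m]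
    {Υ : Matrix n m R} (hΥ : Υᴴ * Υ = 1) {Q : Matrix n n R}
    (h : LinearMap.range Q.mulVecLin ≤ LinearMap.range Υ.mulVecLin) :
    (Υᴴ * Q * Υ).trace = Q.trace := by
  rw [trace_mul_cycle, mul_conjTranspose_mul_eq_self_of_range_le hΥ h]

theorem trace_mul_diagonal_mul_conjTranspose [Fintype k] [DecidableEq k] {U : Matrix m k R}
    (hU : Uᴴ * U = 1) (d : k → R) : (U * diagonal d * Uᴴ).trace = ∑ i, d i := by
  rw [trace_mul_cycle, hU, one_mul, trace_diagonal]

end CommSemiring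

theorem IsHermitian.eq_mul_mul_conjTranspose_of_range_le [Fintype n] [DecidableEq n]
    [Fintype m] [DecidableEq m] [CommSemiring R] [StarRing R] {Υ : Matrix n m R}
    (hΥ : Υᴴ * Υ = 1) {Q : Matrix n n R} (hQ : Q.IsHermitian)
    (h : LinearMap.range Q.mulVecLin ≤ LinearMap.range Υ.mulVecLin) :
    Q = Υ * (Υᴴ * Q * Υ) * Υᴴ := by
  have hleft := mul_conjTranspose_mul_eq_self_of_range_le hΥ h
  have hright : Q * (Υ * Υᴴ) = Q := by
    simpa [conjTranspose_mul, hQ.eq, mul_assoc] using congrArg (·ᴴ) hleft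
  calc Q = Υ * Υᴴ * (Q * (Υ * Υᴴ)) := by rw [hright, hleft]
    _ = Υ * (Υᴴ * Q * Υ) * Υᴴ := by simp only [Matrix.mul_assoc]

section Semiring

variable [Semiring R] [StarRing R] [DecidableEq k] [DecidableEq m]

theorem conjTranspose_submatrix_mul_submatrix_eq_one [Fintype l] {V : Matrix l m R}
    (hV : Vᴴ * V = 1) (e : k ↪ m) : (V.submatrix id e)ᴴ * V.submatrix id e = 1 := by
  rw [conjTranspose_submatrix, ← submatrix_mul _ _ _ _ _ Function.bijective_id, hV,
    submatrix_one_embedding]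

theorem submatrix_mul_diagonal_mul_conjTranspose_submatrix [Fintype k] [Fintype m]
    (V : Matrix l m R) (d : m → R) (e : k ↪ m) (hd : ∀ i ∉ Set.range e, d i = 0) :
    V.submatrix id e * diagonal (d ∘ e) * (V.submatrix id e)ᴴ = V * diagonal d * Vᴴ := by
  ext i j
  simp only [mul_apply, diagonal_apply, conjTranspose_apply, submatrix_apply, id, mul_ite,
    mul_zero, Finset.sum_ite_eq', Finset.mem_univ, if_true, Function.comp_apply]
  exact Fintype.sum_of_injective e e.injective _ _ (fun i hi => by simp [hd i hi]) fun _ => rfl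

end Semiring

theorem PosSemidef.exists_isometry_diagonal_of_rank_le {𝕜 n : Type*} [RCLike 𝕜] [Fintype n]
    [DecidableEq n] {A : Matrix n n 𝕜} (hA : A.PosSemidef) {M : ℕ} (hrank : A.rank ≤ M)
    (hM : M ≤ Fintype.card n) :
    ∃ (U : Matrix n (Fin M) 𝕜) (lam : Fin M → ℝ), Uᴴ * U = 1 ∧ (∀ k, 0 ≤ lam k) ∧
      A = U * diagonal (fun k => (lam k : 𝕜)) * Uᴴ := by
  have hH := hA.isHermitian
  set V : Matrix n n 𝕜 := (hH.eigenvectorUnitary : Matrix n n 𝕜)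
  have hV : Vᴴ * V = 1 := Unitary.star_mul_self_of_mem hH.eigenvectorUnitary.2
  have hspec : A = V * diagonal (RCLike.ofReal ∘ hH.eigenvalues) * Vᴴ := hH.spectral_theorem
  have hsupp : (Finset.univ.filter fun i => hH.eigenvalues i ≠ 0).card ≤ M := by
    rwa [← Fintype.card_subtype, ← hH.rank_eq_card_non_zero_eigs]
  obtain ⟨e, he⟩ := Finset.exists_fin_embedding_range_superset hsupp hM
  refine ⟨V.submatrix id e, hH.eigenvalues ∘ e, conjTranspose_submatrix_mul_submatrix_eq_one hV e,
    fun k => hA.eigenvalues_nonneg (e k), ?_⟩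
  refine hspec.trans (submatrix_mul_diagonal_mul_conjTranspose_submatrix V _ e fun i hi => ?_).symm
  simpa using he i hi

end Matrix

theorem stmt11_general {N m M : ℕ} (hMm : M ≤ m)
    (Υ : Matrix (Fin N) (Fin m) ℂ) (hΥ : Υᴴ * Υ = 1)
    (P : ℝ)
    (Q : Matrix (Fin N) (Fin N) ℂ) (hQ : Q.PosSemidef)
    (hrange : LinearMap.range Q.mulVecLin ≤ LinearMap.range Υ.mulVecLin)
    (hrank : Q.rank ≤ M) (htr : Q.trace = (P : ℂ)) :
    ∃ (U : Matrix (Fin m) (Fin M) ℂ) (lam : Fin M → ℝ),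
      Uᴴ * U = 1 ∧ (∀ k, 0 ≤ lam k) ∧ (∑ k, lam k = P) ∧
      Q = Υ * U * Matrix.diagonal (fun k => (lam k : ℂ)) * Uᴴ * Υᴴ := by
  have hR : (Υᴴ * Q * Υ).PosSemidef := by
    simpa using hQ.conjTranspose_mul_mul_same Υ
  have hRrank : (Υᴴ * Q * Υ).rank ≤ M :=
    ((rank_mul_le_left _ _).trans (rank_mul_le_right _ _)).trans hrank
  obtain ⟨U, lam, hU, hlam, hRU⟩ :=
    hR.exists_isometry_diagonal_of_rank_le hRrank (by simpa using hMm)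
  -- `RCLike.ofReal` at `ℂ` agrees with `Complex.ofReal` only up to unfolding
  replace hRU : Υᴴ * Q * Υ = U * diagonal (fun k => (lam k : ℂ)) * Uᴴ := hRU
  refine ⟨U, lam, hU, hlam, ?_, ?_⟩
  · have htrace := trace_conjTranspose_mul_mul_of_range_le hΥ hrange
    rw [htr, hRU, trace_mul_diagonal_mul_conjTranspose hU] at htrace
    exact_mod_cast htrace
  · rw [hQ.isHermitian.eq_mul_mul_conjTranspose_of_range_le hΥ hrange, hRU]
    simp only [Matrix.mul_assoc]

/-- **Theorem 2, parameterization direction.** If `Υ ∈ ℂ^{N×m}` has orthonormal columns,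
`1 ≤ M ≤ m`, `P > 0`, and `Q ∈ ℂ^{N×N}` is positive semidefinite with
`range Q ⊆ range Υ`, `rank Q ≤ M` and `tr Q = P`, then `Q = Υ U Λ Uᴴ Υᴴ` for some
`U ∈ ℂ^{m×M}` with `Uᴴ U = I` and `Λ = diag (λ₁, …, λ_M)` with `λ_k ≥ 0` and
`∑ k, λ_k = P`. -/
theorem stmt11 {N m M : ℕ} (hM1 : 1 ≤ M) (hMm : M ≤ m)
    (Υ : Matrix (Fin N) (Fin m) ℂ) (hΥ : Υᴴ * Υ = 1)
    (P : ℝ) (hP : 0 < P)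
    (Q : Matrix (Fin N) (Fin N) ℂ) (hQ : Q.PosSemidef)
    (hrange : LinearMap.range Q.mulVecLin ≤ LinearMap.range Υ.mulVecLin)
    (hrank : Q.rank ≤ M) (htr : Q.trace = (P : ℂ)) :
    ∃ (U : Matrix (Fin m) (Fin M) ℂ) (lam : Fin M → ℝ),
      Uᴴ * U = 1 ∧ (∀ k, 0 ≤ lam k) ∧ (∑ k, lam k = P) ∧
      Q = Υ * U * Matrix.diagonal (fun k => (lam k : ℂ)) * Uᴴ * Υᴴ :=
  stmt11_general hMm Υ hΥ P Q hQ hrange hrank htr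
end

section
/- Let U ∈ ℂ^{n×p} satisfy U^H U = I_p and let G ∈ ℂ^{n×p} be arbitrary. Define Z := G − U G^H U. Then (i) Z is in the tangent space of the Stiefel manifold at U, i.e., Z^H U + U^H Z = 0; and (ii) for every Δ ∈ ℂ^{n×p} with Δ^H U + U^H Δ = 0, one has Re tr(G^H Δ) = Re tr(Z^H (I_n − ½ U U^H) Δ). (Gradient formula on the Stiefel manifold with respect to the canonical metric, equation (46).) -/
/-!
With `A := Uᴴ Δ` (skew-Hermitian for a tangent `Δ`) and `UᴴU = 1`, the right-hand side
expands to `Gᴴ Δ - ½ (GᴴU + UᴴG) A`. The matrix `GᴴU + UᴴG` is Hermitian, and the trace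
of a Hermitian times a skew-Hermitian matrix is purely imaginary, so the correction term
has zero real part.
-/

open Matrix

namespace Matrix

variable {𝕜 : Type*} [RCLike 𝕜] {m n p : Type*}

theorem re_trace_mul_eq_zero_of_isHermitian [Fintype m] {H A : Matrix m m 𝕜}
    (hH : H.IsHermitian) (hA : Aᴴ = -A) : RCLike.re (H * A).trace = 0 := by
  have hconj : star (H * A).trace = -(H * A).trace := by
    rw [← trace_conjTranspose, conjTranspose_mul, hA, hH.eq, neg_mul, trace_neg,
      trace_mul_comm]
  have h := congrArg RCLike.re hconj
  rw [RCLike.star_def, RCLike.conj_re, map_neg] at h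
  linarith

theorem conjTranspose_mul_cancel_left [Fintype n] [Fintype p] [DecidableEq p]
    {U : Matrix n p 𝕜} (hU : Uᴴ * U = 1) (X : Matrix p m 𝕜) :
    Uᴴ * (U * X) = X := by
  rw [← Matrix.mul_assoc, hU, Matrix.one_mul]

variable [Fintype n] [Fintype p] [DecidableEq p] {U G : Matrix n p 𝕜}

theorem stiefel_sub_mem_tangent (hU : Uᴴ * U = 1) :
    (G - U * Gᴴ * U)ᴴ * U + Uᴴ * (G - U * Gᴴ * U) = 0 := by
  simp only [conjTranspose_sub, conjTranspose_mul, conjTranspose_conjTranspose,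
    Matrix.sub_mul, Matrix.mul_sub, Matrix.mul_assoc, conjTranspose_mul_cancel_left hU, hU,
    Matrix.mul_one]
  abel

variable [DecidableEq n]

theorem stiefel_canonical_metric_expand (hU : Uᴴ * U = 1) (Δ : Matrix n p 𝕜) :
    (G - U * Gᴴ * U)ᴴ * (1 - (2 : 𝕜)⁻¹ • (U * Uᴴ)) * Δ =
      Gᴴ * Δ - (2 : 𝕜)⁻¹ • ((Gᴴ * U + Uᴴ * G) * (Uᴴ * Δ)) := by
  simp only [conjTranspose_sub, conjTranspose_mul, conjTranspose_conjTranspose,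
    Matrix.sub_mul, Matrix.mul_sub, Matrix.add_mul, Matrix.mul_one,
    Matrix.mul_smul, Matrix.smul_mul, Matrix.mul_assoc, conjTranspose_mul_cancel_left hU,
    smul_sub, smul_add]
  module

theorem re_trace_stiefel_canonical_metric (hU : Uᴴ * U = 1) {Δ : Matrix n p 𝕜}
    (hΔ : Δᴴ * U + Uᴴ * Δ = 0) :
    RCLike.re (Gᴴ * Δ).trace =
      RCLike.re ((G - U * Gᴴ * U)ᴴ * (1 - (2 : 𝕜)⁻¹ • (U * Uᴴ)) * Δ).trace := by
  have hHerm : (Gᴴ * U + Uᴴ * G).IsHermitian := by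
    simp only [IsHermitian, conjTranspose_add, conjTranspose_mul,
      conjTranspose_conjTranspose, add_comm]
  have hSkew : (Uᴴ * Δ)ᴴ = -(Uᴴ * Δ) := by
    rw [conjTranspose_mul, conjTranspose_conjTranspose]
    exact eq_neg_of_add_eq_zero_left hΔ
  rw [stiefel_canonical_metric_expand hU, trace_sub, trace_smul, smul_eq_mul, map_sub,
    ← RCLike.ofReal_ofNat, ← RCLike.ofReal_inv, RCLike.re_ofReal_mul,
    re_trace_mul_eq_zero_of_isHermitian hHerm hSkew, mul_zero, sub_zero]

end Matrix

/-- **Gradient formula on the Stiefel manifold (equation (46)).** Let `U ∈ ℂ^{n×p}` with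
`Uᴴ U = I` and let `G ∈ ℂ^{n×p}`. Define `Z := G − U Gᴴ U`. Then (i) `Z` lies in the
tangent space of the Stiefel manifold at `U`, i.e. `Zᴴ U + Uᴴ Z = 0`; and (ii) for every
tangent vector `Δ` at `U`, `Re tr (Gᴴ Δ) = Re tr (Zᴴ (I − ½ U Uᴴ) Δ)`. -/
theorem stmt14 {n p : ℕ} (U G : Matrix (Fin n) (Fin p) ℂ) (hU : Uᴴ * U = 1) :
    ((G - U * Gᴴ * U)ᴴ * U + Uᴴ * (G - U * Gᴴ * U) = 0) ∧
      ∀ Δ : Matrix (Fin n) (Fin p) ℂ, Δᴴ * U + Uᴴ * Δ = 0 →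
        ((Gᴴ * Δ).trace).re =
          (((G - U * Gᴴ * U)ᴴ *
            ((1 : Matrix (Fin n) (Fin n) ℂ) - (2 : ℂ)⁻¹ • (U * Uᴴ)) * Δ).trace).re :=
  ⟨stiefel_sub_mem_tangent hU, fun _ hΔ => re_trace_stiefel_canonical_metric hU hΔ⟩
end

section
/- Let U ∈ ℂ^{n×p} with U^H U = I_p, let Δ ∈ ℂ^{n×p} with A := U^H Δ skew-Hermitian (A^H = −A), and let Q ∈ ℂ^{n×p}, R ∈ ℂ^{p×p} satisfy Q R = (I − U U^H) Δ, Q^H Q = I_p, and U^H Q = 0. Define, for t ∈ ℝ, the p×p matrices M(t) and N(t) by stacking: [M(t); N(t)] = exp(t [[A, −R^H], [R, 0]]) [I_p; 0], where exp is the matrix exponential, and set U(t) := U M(t) + Q N(t). Then (i) U(t)^H U(t) = I_p for all t (the curve stays on the Stiefel manifold), (ii) U(0) = U, and (iii) the derivative of U(t) at t = 0 equals Δ. (Content of Theorem 3, the geodesic formula of Edelman et al.) -/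
/-!
Writing `W = [U Q]` and `X = [[A, −Rᴴ], [R, 0]]`, the curve is `U(t) = W · exp(tX) · [I; 0]`.
Here `Wᴴ W = I`, and `X` is skew-Hermitian, so `exp(tX)` is unitary and its first block column
an isometry; hence so is the product. At `t = 0` the exponential is the identity, and the
derivative there is `W · X · [I; 0] = U A + Q R = U Uᴴ Δ + (I − U Uᴴ) Δ = Δ`.
-/

open Matrix

/-- The geodesic curve of Edelman et al.: `U(t) = U M(t) + Q N(t)` where
`[M(t); N(t)] = exp (t [[A, −Rᴴ], [R, 0]]) [I; 0]`, i.e. `M(t)` and `N(t)` are the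
`(1,1)` and `(2,1)` blocks of the matrix exponential. -/
noncomputable def geod {n p : ℕ} (U Q : Matrix (Fin n) (Fin p) ℂ)
    (A R : Matrix (Fin p) (Fin p) ℂ) (t : ℝ) : Matrix (Fin n) (Fin p) ℂ :=
  U * (NormedSpace.exp ((t : ℂ) • Matrix.fromBlocks A (-Rᴴ) R 0)).toBlocks₁₁ +
    Q * (NormedSpace.exp ((t : ℂ) • Matrix.fromBlocks A (-Rᴴ) R 0)).toBlocks₂₁

namespace Matrix

variable {α : Type*} {l m n o : Type*}

theorem fromRows_toBlocks₁₁_toBlocks₂₁ (E : Matrix (m ⊕ n) (l ⊕ o) α) :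
    fromRows E.toBlocks₁₁ E.toBlocks₂₁ = E.submatrix id Sum.inl := by
  ext (i | i) j <;> rfl

section StarRing

variable [Semiring α] [StarRing α]

theorem conjTranspose_mul_mul_self_eq_one [Fintype l] [Fintype m] [DecidableEq m]
    [DecidableEq n]
    {W : Matrix l m α} {S : Matrix m n α} (hW : Wᴴ * W = 1) (hS : Sᴴ * S = 1) :
    (W * S)ᴴ * (W * S) = 1 := by
  rw [conjTranspose_mul, Matrix.mul_assoc, ← Matrix.mul_assoc Wᴴ, hW, Matrix.one_mul, hS]

theorem conjTranspose_submatrix_mul_self_eq_one [Fintype o] [DecidableEq m] [DecidableEq n]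
    {E : Matrix o m α} (hE : Eᴴ * E = 1) {f : n → m} (hf : Function.Injective f) :
    (E.submatrix id f)ᴴ * E.submatrix id f = 1 := by
  rw [conjTranspose_submatrix, ← submatrix_mul _ _ _ _ _ Function.bijective_id, hE,
    submatrix_one f hf]

theorem conjTranspose_fromCols_mul_fromCols [Fintype l] [DecidableEq m] [DecidableEq n]
    {U : Matrix l m α} {Q : Matrix l n α} (hU : Uᴴ * U = 1) (hQ : Qᴴ * Q = 1)
    (hUQ : Uᴴ * Q = 0) : (fromCols U Q)ᴴ * fromCols U Q = 1 := by
  have hQU : Qᴴ * U = 0 := by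
    rw [← conjTranspose_conjTranspose (Qᴴ * U), conjTranspose_mul, conjTranspose_conjTranspose,
      hUQ, conjTranspose_zero]
  rw [conjTranspose_fromCols_eq_fromRows_conjTranspose, fromRows_mul_fromCols, hU, hQ, hUQ, hQU,
    fromBlocks_one]

end StarRing

theorem conjTranspose_fromBlocks_neg_conjTranspose_zero [Ring α] [StarRing α]
    {A : Matrix m m α} (hA : Aᴴ = -A) (R : Matrix n m α) :
    (fromBlocks A (-Rᴴ) R 0)ᴴ = -fromBlocks A (-Rᴴ) R 0 := by
  rw [fromBlocks_conjTranspose, hA, conjTranspose_neg, conjTranspose_conjTranspose,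
    conjTranspose_zero, fromBlocks_neg, neg_neg, neg_zero]

theorem hasDerivAt_mul_apply [Fintype m] {F : ℝ → Matrix m n ℂ} {F' : Matrix m n ℂ} {t₀ : ℝ}
    (hF : ∀ a b, HasDerivAt (fun t => F t a b) (F' a b) t₀) (W : Matrix l m ℂ) (i : l) (j : n) :
    HasDerivAt (fun t => (W * F t) i j) ((W * F') i j) t₀ := by
  simp only [mul_apply]
  exact HasDerivAt.fun_sum fun k _ => (hF k j).const_mul (W i k)

section Exp

variable [Fintype m] [DecidableEq m]

theorem conjTranspose_exp_real_smul_mul_self {X : Matrix m m ℂ} (hX : Xᴴ = -X) (t : ℝ) :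
    (NormedSpace.exp ((t : ℂ) • X))ᴴ * NormedSpace.exp ((t : ℂ) • X) = 1 := by
  have hskew : ((t : ℂ) • X)ᴴ = -((t : ℂ) • X) := by
    rw [conjTranspose_smul, hX, Complex.star_def, Complex.conj_ofReal, smul_neg]
  rw [← exp_conjTranspose, hskew,
    ← exp_add_of_commute (-((t : ℂ) • X)) _ (Commute.refl _).neg_left, neg_add_cancel,
    NormedSpace.exp_zero]

open scoped Norms.Operator in
theorem hasDerivAt_exp_real_smul_apply (X : Matrix m m ℂ) (a b : m) :
    HasDerivAt (fun t : ℝ => NormedSpace.exp ((t : ℂ) • X) a b) (X a b) 0 := by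
  have hexp : HasDerivAt (fun z : ℂ => NormedSpace.exp (z • X)) X 0 := by
    have := hasDerivAt_exp_smul_const (𝕂 := ℂ) X 0
    rwa [zero_smul, NormedSpace.exp_zero, one_mul] at this
  have hentry : HasDerivAt (fun z : ℂ => NormedSpace.exp (z • X) a b) (X a b) 0 :=
    ((entryLinearMap ℂ ℂ a b).toContinuousLinearMap.hasFDerivAt).comp_hasDerivAt (0 : ℂ) hexp
  simpa using hentry.comp_ofReal (z := 0)

end Exp

end Matrix

theorem geod_eq_fromCols_mul {n p : ℕ} (U Q : Matrix (Fin n) (Fin p) ℂ)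
    (A R : Matrix (Fin p) (Fin p) ℂ) (t : ℝ) :
    geod U Q A R t = fromCols U Q *
      (NormedSpace.exp ((t : ℂ) • fromBlocks A (-Rᴴ) R 0)).submatrix id Sum.inl := by
  rw [geod, ← fromCols_mul_fromRows, fromRows_toBlocks₁₁_toBlocks₂₁]

/-- **Theorem 3 (geodesic formula of Edelman et al.).** Let `U ∈ ℂ^{n×p}` with
`Uᴴ U = I`, let `Δ` be such that `A := Uᴴ Δ` is skew-Hermitian, and let `Q, R` give the
QR-type factorization `Q R = (I − U Uᴴ) Δ` with `Qᴴ Q = I` and `Uᴴ Q = 0`. Then the curve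
`U(t) = U M(t) + Q N(t)` (i) stays on the Stiefel manifold: `U(t)ᴴ U(t) = I` for all `t`,
(ii) satisfies `U(0) = U`, and (iii) has derivative `Δ` at `t = 0` (entrywise). -/
theorem stmt16 {n p : ℕ} (U Δ Q : Matrix (Fin n) (Fin p) ℂ)
    (R : Matrix (Fin p) (Fin p) ℂ)
    (hU : Uᴴ * U = 1) (hA : (Uᴴ * Δ)ᴴ = -(Uᴴ * Δ))
    (hQR : Q * R = (1 - U * Uᴴ) * Δ) (hQ : Qᴴ * Q = 1) (hUQ : Uᴴ * Q = 0) :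
    (∀ t : ℝ, (geod U Q (Uᴴ * Δ) R t)ᴴ * geod U Q (Uᴴ * Δ) R t = 1) ∧
      geod U Q (Uᴴ * Δ) R 0 = U ∧
      ∀ i j, HasDerivAt (fun t : ℝ => geod U Q (Uᴴ * Δ) R t i j) (Δ i j) 0 := by
  set X := fromBlocks (Uᴴ * Δ) (-Rᴴ) R 0
  have hX : Xᴴ = -X := conjTranspose_fromBlocks_neg_conjTranspose_zero hA R
  refine ⟨fun t => ?_, ?_, fun i j => ?_⟩
  · rw [geod_eq_fromCols_mul]
    exact conjTranspose_mul_mul_self_eq_one (conjTranspose_fromCols_mul_fromCols hU hQ hUQ) <|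
      conjTranspose_submatrix_mul_self_eq_one (conjTranspose_exp_real_smul_mul_self hX t)
        Sum.inl_injective
  · rw [geod, Complex.ofReal_zero, zero_smul, NormedSpace.exp_zero, ← fromBlocks_one,
      toBlocks_fromBlocks₁₁, toBlocks_fromBlocks₂₁, Matrix.mul_one, Matrix.mul_zero, add_zero]
  · have hΔ : fromCols U Q * X.submatrix id Sum.inl = Δ := by
      rw [← fromRows_toBlocks₁₁_toBlocks₂₁, toBlocks_fromBlocks₁₁, toBlocks_fromBlocks₂₁,
        fromCols_mul_fromRows, hQR, ← Matrix.mul_assoc, Matrix.sub_mul, Matrix.one_mul,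
        add_sub_cancel]
    have h := hasDerivAt_mul_apply (F' := X.submatrix id Sum.inl)
      (fun a b => hasDerivAt_exp_real_smul_apply X a (Sum.inl b)) (fromCols U Q) i j
    rw [hΔ] at h
    simp only [geod_eq_fromCols_mul]
    exact h
end
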